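/- Let G be a strongly connected signed digraph. Then the signed network ẋ = −W·L·x achieves signed-average consensus if and only if G is structurally balanced; precisely: G is structurally balanced if and only if there exists a gauge transformation D with every entry of D·A·D nonnegative such that for every initial state x₀ ∈ ℝⁿ, the solution x(t) = exp(−t·W·L)·x₀ satisfies lim_{t→∞} x(t) = ((1_nᵀ·D·x₀)/n)·D·1_n, where 1_n is the all-ones vector in ℝⁿ. -/

import Mathlib

open Matrix BigOperators Filter

/-- In-degree of node `i`: sum of absolute values of the `i`-th row of `A`. -/
noncomputable def inDeg {n : ℕ} (A : Matrix (Fin n) (Fin n) ℝ) (i : Fin n) : ℝ := ∑ j, |A i j|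

/-- Laplacian `L = Δ − A` of the signed digraph with adjacency matrix `A`. -/
noncomputable def lapOf {n : ℕ} (A : Matrix (Fin n) (Fin n) ℝ) : Matrix (Fin n) (Fin n) ℝ :=
  Matrix.diagonal (inDeg A) - A

/-- Laplacian `L̄ = Δ − Ā` of the induced unsigned digraph. -/
noncomputable def lapBar {n : ℕ} (A : Matrix (Fin n) (Fin n) ℝ) : Matrix (Fin n) (Fin n) ℝ :=
  Matrix.diagonal (inDeg A) - Matrix.of (fun i j => |A i j|)

/-- `det(L̄_ii)`: determinant of `L̄` with its `i`-th row and column removed. -/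
noncomputable def minorDet {n : ℕ} (A : Matrix (Fin n) (Fin n) ℝ) (i : Fin n) : ℝ :=
  Matrix.det ((lapBar A).submatrix (fun k : {j : Fin n // j ≠ i} => (k : Fin n))
    (fun k : {j : Fin n // j ≠ i} => (k : Fin n)))

/-- `W = diag(det(L̄_11), …, det(L̄_nn))`. -/
noncomputable def Wmat {n : ℕ} (A : Matrix (Fin n) (Fin n) ℝ) : Matrix (Fin n) (Fin n) ℝ :=
  Matrix.diagonal (minorDet A)

/-- Mirror adjacency matrix `Â = (W·A + Aᵀ·W)/2`. -/
noncomputable def mirrorAdj {n : ℕ} (A : Matrix (Fin n) (Fin n) ℝ) : Matrix (Fin n) (Fin n) ℝ :=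
  (1/2 : ℝ) • (Wmat A * A + Aᵀ * Wmat A)

/-- Mirror Laplacian `L̂ = (W·L + Lᵀ·W)/2`. -/
noncomputable def mirrorLap {n : ℕ} (A : Matrix (Fin n) (Fin n) ℝ) : Matrix (Fin n) (Fin n) ℝ :=
  (1/2 : ℝ) • (Wmat A * lapOf A + (lapOf A)ᵀ * Wmat A)

/-- `(j, i)` is a directed edge when `a_ij ≠ 0`; strong connectivity: a directed
path between every ordered pair of distinct nodes. -/
def StronglyConnected {n : ℕ} (A : Matrix (Fin n) (Fin n) ℝ) : Prop :=
  ∀ i j : Fin n, i ≠ j → Relation.TransGen (fun u v => A v u ≠ 0) i j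

/-- `σ` is the diagonal of a gauge transformation: each entry is `±1`. -/
def IsGauge {n : ℕ} (σ : Fin n → ℝ) : Prop := ∀ i, σ i = 1 ∨ σ i = -1

/-- Structural balance: there is a gauge transformation `D = diag σ` with all entries
of `D·A·D` (entrywise `σ i * A i j * σ j`) nonnegative. -/
def StructBalanced {n : ℕ} (A : Matrix (Fin n) (Fin n) ℝ) : Prop :=
  ∃ σ : Fin n → ℝ, IsGauge σ ∧ ∀ i j, 0 ≤ σ i * A i j * σ j

/-- Improved Laplacian potential function
`Φ_e(x) = Σ_i Σ_j det(L̄_ii)·|a_ij|·(x_i − sgn(a_ij)·x_j)²`. -/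
noncomputable def PhiE {n : ℕ} (A : Matrix (Fin n) (Fin n) ℝ) (x : Fin n → ℝ) : ℝ :=
  ∑ i, ∑ j, minorDet A i * |A i j| * (x i - Real.sign (A i j) * x j) ^ 2

/-!
Put `M = W·L̄`. Since `L̄` has zero row sums, every column of `adj L̄` is constant, so
`(det L̄ᵢᵢ)ᵢ = diag (adj L̄)` is a left null vector of `L̄`: `M` has zero row and column sums, and
`xᵀ M x = ½ ∑ᵢⱼ det L̄ᵢᵢ |aᵢⱼ| (xᵢ - xⱼ)²`. Strong connectivity gives `det L̄ᵢᵢ > 0` (a maximum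
principle shows `det (t + L̄ᵢᵢ) ≠ 0` for `t ≥ 0`), so this form is positive definite on the
zero-sum hyperplane, which `exp (-t M)` preserves. There `|x(t)|²` decays exponentially, so
`exp (-t M) y` tends to the average of `y`. For a balancing gauge `D` one has `W L = D M D`, which
carries this over to the signed network; the converse is immediate.
-/

open Topology

namespace Matrix

variable {ι R : Type*} [Fintype ι]

section ZeroRowSums

variable [DecidableEq ι] [CommRing R]

theorem det_updateRow_single_self (N : Matrix ι ι R) (j : ι) :
    (N.updateRow j (Pi.single j 1)).det = (N.submatrix ((↑) : {l // l ≠ j} → ι) (↑)).det := by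
  let e : {l // l ≠ j} ⊕ {l // ¬l ≠ j} ≃ ι := Equiv.sumCompl _
  have : Unique {l // ¬l ≠ j} :=
    ⟨⟨⟨j, not_not.mpr rfl⟩⟩, fun ⟨l, hl⟩ => Subtype.ext (not_not.mp hl)⟩
  have hblocks : (N.updateRow j (Pi.single j 1)).submatrix e e =
      fromBlocks (N.submatrix ((↑) : {l // l ≠ j} → ι) (↑))
        (of fun a (_ : {l // ¬l ≠ j}) => N a j) 0 1 := by
    ext (a | a) (b | b)
    · simp [e, updateRow_ne a.2]
    · simp [e, updateRow_ne a.2, not_not.mp b.2]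
    · simp [e, not_not.mp a.2, b.2]
    · simp [e, not_not.mp b.2, Subsingleton.elim a b]
  rw [← det_submatrix_equiv_self e, hblocks, det_fromBlocks_zero₂₁, det_one, mul_one]

variable [IsDomain R] {N : Matrix ι ι R}

theorem det_eq_zero_of_mulVec_one_eq_zero [Nonempty ι] (h : N *ᵥ 1 = 0) : N.det = 0 :=
  exists_mulVec_eq_zero_iff.mp ⟨1, one_ne_zero, h⟩

theorem adjugate_apply_eq_adjugate_apply_self (h : N *ᵥ 1 = 0) (i j : ι) :
    adjugate N i j = adjugate N j j := by
  have : Nonempty ι := ⟨i⟩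
  have hdiff : (N.updateRow j (Pi.single i 1 + (-1 : R) • Pi.single j 1)).det = 0 := by
    refine det_eq_zero_of_mulVec_one_eq_zero ?_
    ext k
    rcases eq_or_ne k j with rfl | hk
    · simp [updateRow_mulVec]
    · simp [updateRow_mulVec, hk, h]
  rw [det_updateRow_add, det_updateRow_smul] at hdiff
  rw [adjugate_apply, adjugate_apply]
  linear_combination hdiff

theorem diag_adjugate_vecMul_eq_zero (h : N *ᵥ 1 = 0) : (fun i => adjugate N i i) ᵥ* N = 0 := by
  ext j
  have : Nonempty ι := ⟨j⟩
  have hadj := congr_fun (congr_fun (adjugate_mul N) j) j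
  rw [det_eq_zero_of_mulVec_one_eq_zero h, zero_smul, mul_apply] at hadj
  simpa [vecMul, dotProduct, ← adjugate_apply_eq_adjugate_apply_self h j] using hadj

end ZeroRowSums

theorem two_mul_dotProduct_mulVec_self [CommRing R] {N : Matrix ι ι R} (hrow : N *ᵥ 1 = 0)
    (hcol : 1 ᵥ* N = 0) (x : ι → R) :
    2 * (x ⬝ᵥ (N *ᵥ x)) = -∑ i, ∑ j, N i j * (x i - x j) ^ 2 := by
  have hr : ∀ i, ∑ j, N i j = 0 := fun i => by simpa [mulVec, dotProduct] using congr_fun hrow i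
  have hc : ∀ j, ∑ i, N i j = 0 := fun j => by simpa [vecMul, dotProduct] using congr_fun hcol j
  have hsq : ∀ i j, N i j * (x i - x j) ^ 2
      = x i ^ 2 * N i j + x j ^ 2 * N i j - 2 * (x i * (N i j * x j)) := fun i j => by ring
  simp only [hsq, Finset.sum_sub_distrib, Finset.sum_add_distrib, ← Finset.mul_sum, hr]
  rw [Finset.sum_comm (f := fun i j => x j ^ 2 * N i j)]
  simp only [← Finset.mul_sum, hc, mul_zero, Finset.sum_const_zero, mulVec, dotProduct]
  ring

theorem exists_pos_mul_dotProduct_self_le (M : Matrix ι ι ℝ) (V : Submodule ℝ (ι → ℝ))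
    (hpos : ∀ x ∈ V, x ≠ 0 → 0 < x ⬝ᵥ (M *ᵥ x)) :
    ∃ c > 0, ∀ x ∈ V, c * (x ⬝ᵥ x) ≤ x ⬝ᵥ (M *ᵥ x) := by
  let K : Set (ι → ℝ) := V ∩ {x | x ⬝ᵥ x = 1}
  have hKclosed : IsClosed K :=
    V.closed_of_finiteDimensional.inter (isClosed_eq (by fun_prop) continuous_const)
  have hKbdd : Bornology.IsBounded K := by
    refine Metric.isBounded_closedBall (x := 0) (r := 1) |>.subset fun x hx => ?_
    rw [mem_closedBall_zero_iff, pi_norm_le_iff_of_nonneg zero_le_one]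
    intro i
    rw [Real.norm_eq_abs, abs_le_one_iff_mul_self_le_one, ← hx.2]
    exact Finset.single_le_sum (fun j _ => mul_self_nonneg (x j)) (Finset.mem_univ i)
  obtain ⟨c, hc, hcK⟩ := (Metric.isCompact_of_isClosed_isBounded hKclosed hKbdd).exists_forall_le'
    (f := fun x => x ⬝ᵥ (M *ᵥ x)) (by fun_prop) (a := 0)
    fun u hu => hpos u hu.1 (by rintro rfl; simpa using hu.2)
  refine ⟨c, hc, fun x hx => ?_⟩
  rcases eq_or_ne x 0 with rfl | hx0
  · simp
  have hs : 0 < x ⬝ᵥ x := (Fintype.sum_nonneg fun i => mul_self_nonneg (x i)).lt_of_ne'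
    (dotProduct_self_eq_zero.not.mpr hx0)
  set r := Real.sqrt (x ⬝ᵥ x)
  have hr : r * r = x ⬝ᵥ x := Real.mul_self_sqrt hs.le
  have hr0 : r ≠ 0 := (Real.sqrt_pos.mpr hs).ne'
  have hu := hcK (r⁻¹ • x) ⟨V.smul_mem _ hx, by
    simp [dotProduct_smul, smul_dotProduct]; field_simp; linarith⟩
  simp only [mulVec_smul, dotProduct_smul, smul_dotProduct, smul_eq_mul] at hu
  rw [← hr]
  calc c * (r * r) ≤ r⁻¹ * (r⁻¹ * (x ⬝ᵥ (M *ᵥ x))) * (r * r) := by gcongr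
    _ = x ⬝ᵥ (M *ᵥ x) := by field_simp

theorem tendsto_nhds_zero_of_dotProduct_deriv_le {x x' : ℝ → ι → ℝ} {c : ℝ} (hc : 0 < c)
    (hx : ∀ t, HasDerivAt x (x' t) t) (hle : ∀ t, x t ⬝ᵥ x' t ≤ -c * (x t ⬝ᵥ x t)) :
    Tendsto x atTop (𝓝 0) := by
  set F : ℝ → ℝ := fun t => x t ⬝ᵥ x t
  have hF : ∀ t, HasDerivAt F (2 * (x t ⬝ᵥ x' t)) t := by
    intro t
    have := HasDerivAt.fun_sum (u := Finset.univ) fun i _ =>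
      (hasDerivAt_pi.mp (hx t) i).mul (hasDerivAt_pi.mp (hx t) i)
    refine this.congr_deriv ?_
    simp only [dotProduct, Finset.mul_sum]
    exact Finset.sum_congr rfl fun i _ => by ring
  have hFcont : Continuous F := continuous_iff_continuousAt.mpr fun t => (hF t).continuousAt
  have hbound : ∀ t, 0 ≤ t → F t ≤ F 0 * Real.exp (-(2 * c) * t) := by
    intro t ht
    have := le_gronwallBound_of_liminf_deriv_right_le (δ := F 0) (K := -(2 * c)) (ε := 0)
      (a := 0) (b := t) hFcont.continuousOn
      (fun s _ r hr => (hF s).hasDerivWithinAt.liminf_right_slope_le hr) le_rfl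
      (fun s _ => by linarith [hle s]) t ⟨ht, le_rfl⟩
    simpa [gronwallBound_ε0] using this
  have hF0 : Tendsto F atTop (𝓝 0) := by
    have hexp : Tendsto (fun t => F 0 * Real.exp (-(2 * c) * t)) atTop (𝓝 0) := by
      simpa using (Real.tendsto_exp_neg_atTop_nhds_zero.comp
        (tendsto_id.const_mul_atTop (by positivity : 0 < 2 * c))).const_mul (F 0)
    exact tendsto_of_tendsto_of_tendsto_of_le_of_le' tendsto_const_nhds hexp
      (Eventually.of_forall fun t => Fintype.sum_nonneg fun i => mul_self_nonneg (x t i))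
      ((eventually_ge_atTop 0).mono hbound)
  refine tendsto_pi_nhds.mpr fun i => squeeze_zero_norm (a := fun t => Real.sqrt (F t))
    (fun t => Real.abs_le_sqrt ?_)
    (by simpa [Function.comp_def] using (Real.continuous_sqrt.tendsto 0).comp hF0)
  rw [sq]
  exact Finset.single_le_sum (fun j _ => mul_self_nonneg (x t j)) (Finset.mem_univ i)

variable [DecidableEq ι]

theorem det_pos_of_det_smul_one_add_ne_zero (C : Matrix ι ι ℝ)
    (h : ∀ t : ℝ, 0 ≤ t → (t • 1 + C).det ≠ 0) : 0 < C.det := by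
  have hcont : Continuous fun t : ℝ => (t • 1 + C).det := by fun_prop
  have hlim : Tendsto (fun t : ℝ => (1 + t⁻¹ • C).det) atTop (𝓝 1) := by
    have : Continuous fun s : ℝ => (1 + s • C).det := by fun_prop
    simpa [Function.comp_def] using (this.tendsto 0).comp tendsto_inv_atTop_zero
  obtain ⟨T, hT1, hT⟩ :=
    ((hlim.eventually (eventually_gt_nhds one_pos)).and (eventually_gt_atTop 0)).exists
  have hdetT : 0 < (T • 1 + C).det := by
    rw [show T • 1 + C = T • (1 + T⁻¹ • C) by
      rw [smul_add, smul_smul, mul_inv_cancel₀ hT.ne', one_smul], det_smul]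
    positivity
  by_contra hneg
  obtain ⟨t, ht, hroot⟩ := intermediate_value_Icc hT.le hcont.continuousOn
    (show (0 : ℝ) ∈ Set.Icc ((0 : ℝ) • 1 + C).det (T • 1 + C).det from
      ⟨by simpa using not_lt.mp hneg, hdetT.le⟩)
  exact h t ht.1 hroot

theorem hasDerivAt_exp_neg_smul_mulVec (M : Matrix ι ι ℝ) (z : ι → ℝ) (t : ℝ) :
    HasDerivAt (fun s : ℝ => NormedSpace.exp (-(s • M)) *ᵥ z)
      (-(M *ᵥ (NormedSpace.exp (-(t • M)) *ᵥ z))) t := by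
  open scoped Matrix.Norms.Operator in
  have hcomp := ((mulVecBilin ℝ ℝ).flip z).toContinuousLinearMap.hasFDerivAt.comp_hasDerivAt t
    (hasDerivAt_exp_smul_const' (𝕂 := ℝ) (-M) t)
  simp only [smul_neg] at hcomp
  refine hcomp.congr_deriv ?_
  change (-M * _) *ᵥ z = _
  rw [neg_mul, neg_mulVec, mulVec_mulVec]
  -- the sides differ only in the (definitionally equal) topologies `exp` is built from
  rfl

theorem exp_neg_smul_mulVec_of_mulVec_eq_zero {M : Matrix ι ι ℝ} {v : ι → ℝ} (h : M *ᵥ v = 0)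
    (t : ℝ) : NormedSpace.exp (-(t • M)) *ᵥ v = v := by
  have hderiv : ∀ s : ℝ, HasDerivAt (fun s : ℝ => NormedSpace.exp (-(s • M)) *ᵥ v) 0 s := by
    intro s
    have hcomm : Commute M (NormedSpace.exp (-(s • M))) :=
      ((Commute.refl M).smul_right s).neg_right.exp_right
    convert hasDerivAt_exp_neg_smul_mulVec M v s using 1
    rw [mulVec_mulVec, hcomm.eq, ← mulVec_mulVec, h, mulVec_zero, neg_zero]
  have := is_const_of_deriv_eq_zero (fun s => (hderiv s).differentiableAt)
    (fun s => (hderiv s).deriv) t 0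
  simpa using this

theorem one_dotProduct_exp_neg_smul_mulVec {M : Matrix ι ι ℝ} (hcol : 1 ᵥ* M = 0) (t : ℝ)
    (z : ι → ℝ) : 1 ⬝ᵥ (NormedSpace.exp (-(t • M)) *ᵥ z) = 1 ⬝ᵥ z := by
  have hfix := exp_neg_smul_mulVec_of_mulVec_eq_zero (M := Mᵀ) (v := 1)
    (by rw [mulVec_transpose, hcol]) t
  rw [← transpose_smul, ← transpose_neg, exp_transpose, mulVec_transpose] at hfix
  rw [dotProduct_mulVec, hfix]

theorem tendsto_exp_neg_smul_mulVec_nhds_zero {M : Matrix ι ι ℝ} (hcol : 1 ᵥ* M = 0)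
    (hpos : ∀ x, 1 ⬝ᵥ x = 0 → x ≠ 0 → 0 < x ⬝ᵥ (M *ᵥ x)) {z : ι → ℝ} (hz : 1 ⬝ᵥ z = 0) :
    Tendsto (fun t : ℝ => NormedSpace.exp (-(t • M)) *ᵥ z) atTop (𝓝 0) := by
  obtain ⟨c, hc, hray⟩ := exists_pos_mul_dotProduct_self_le M
    (LinearMap.ker (dotProductBilin ℝ ℝ 1)) fun x hx => hpos x (by simpa using hx)
  refine tendsto_nhds_zero_of_dotProduct_deriv_le hc (hasDerivAt_exp_neg_smul_mulVec M z)
    fun t => ?_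
  have := hray (NormedSpace.exp (-(t • M)) *ᵥ z)
    (by simpa [one_dotProduct_exp_neg_smul_mulVec hcol] using hz)
  rw [dotProduct_neg]
  linarith

theorem tendsto_exp_neg_smul_mulVec_average {M : Matrix ι ι ℝ} (hrow : M *ᵥ 1 = 0)
    (hcol : 1 ᵥ* M = 0) (hpos : ∀ x, 1 ⬝ᵥ x = 0 → x ≠ 0 → 0 < x ⬝ᵥ (M *ᵥ x)) (y : ι → ℝ) :
    Tendsto (fun t : ℝ => NormedSpace.exp (-(t • M)) *ᵥ y) atTop
      (𝓝 fun _ => (∑ j, y j) / Fintype.card ι) := by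
  set a := (∑ j, y j) / Fintype.card ι
  have hfix (t : ℝ) : NormedSpace.exp (-(t • M)) *ᵥ (a • 1) = a • 1 :=
    exp_neg_smul_mulVec_of_mulVec_eq_zero (by rw [mulVec_smul, hrow, smul_zero]) t
  have hz : 1 ⬝ᵥ (y - a • 1) = 0 := by
    obtain _ | _ := isEmpty_or_nonempty ι <;> simp [dotProduct_sub, one_dotProduct, a]
  have := (tendsto_exp_neg_smul_mulVec_nhds_zero hcol hpos hz).const_add (a • 1)
  convert this using 2 with t
  · rw [mulVec_sub, hfix, add_sub_cancel]
  · ext; simp [a]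

end Matrix

section Laplacian

variable {n : ℕ} (A : Matrix (Fin n) (Fin n) ℝ)

theorem lapBar_mulVec_apply (y : Fin n → ℝ) (k : Fin n) :
    (lapBar A *ᵥ y) k = ∑ j, |A k j| * (y k - y j) := by
  rw [lapBar, sub_mulVec, Pi.sub_apply, mulVec_diagonal]
  simp [inDeg, mulVec, dotProduct, mul_sub, Finset.sum_mul]

theorem lapBar_mulVec_one : lapBar A *ᵥ 1 = 0 := by
  ext k
  simp [lapBar_mulVec_apply]

theorem adjugate_lapBar_apply_self (i : Fin n) :
    adjugate (lapBar A) i i = minorDet A i := by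
  rw [adjugate_apply, det_updateRow_single_self]
  rfl

theorem minorDet_vecMul_lapBar : minorDet A ᵥ* lapBar A = 0 := by
  simpa only [adjugate_lapBar_apply_self] using diag_adjugate_vecMul_eq_zero (lapBar_mulVec_one A)

theorem Wmat_mul_lapBar_mulVec_one : (Wmat A * lapBar A) *ᵥ 1 = 0 := by
  rw [← mulVec_mulVec, lapBar_mulVec_one, mulVec_zero]

theorem one_vecMul_Wmat_mul_lapBar : 1 ᵥ* (Wmat A * lapBar A) = 0 := by
  have : 1 ᵥ* Wmat A = minorDet A := funext fun i => by simp [Wmat, vecMul_diagonal]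
  rw [← vecMul_vecMul, this, minorDet_vecMul_lapBar]

theorem two_mul_dotProduct_Wmat_mul_lapBar_mulVec (x : Fin n → ℝ) :
    2 * (x ⬝ᵥ ((Wmat A * lapBar A) *ᵥ x))
      = ∑ i, ∑ j, minorDet A i * |A i j| * (x i - x j) ^ 2 := by
  rw [two_mul_dotProduct_mulVec_self (Wmat_mul_lapBar_mulVec_one A)
    (one_vecMul_Wmat_mul_lapBar A), ← Finset.sum_neg_distrib]
  refine Finset.sum_congr rfl fun i _ => ?_
  rw [← Finset.sum_neg_distrib]
  refine Finset.sum_congr rfl fun j _ => ?_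
  rcases eq_or_ne i j with rfl | hij
  · simp
  · simp [Wmat, lapBar, diagonal_mul, hij]

variable {A}

namespace StronglyConnected

theorem mem_of_pred_closed (hsc : StronglyConnected A) {S : Set (Fin n)}
    (hS : ∀ u v, A v u ≠ 0 → v ∈ S → u ∈ S) {j : Fin n} (hj : j ∈ S) (i : Fin n) : i ∈ S := by
  rcases eq_or_ne i j with rfl | hij
  · exact hj
  exact (hsc i j hij).head_induction_on (fun huv => hS _ _ huv hj) fun huv _ ih => hS _ _ huv ih

theorem eq_of_forall_adj_eq (hsc : StronglyConnected A) {x : Fin n → ℝ}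
    (hx : ∀ u v, A v u ≠ 0 → x v = x u) (i j : Fin n) : x i = x j :=
  hsc.mem_of_pred_closed (S := {k | x k = x j}) (fun u v huv hv => (hx u v huv).symm.trans hv)
    rfl i

/-- Maximum principle: a positive maximum of `y` would propagate backwards along edges to `i`. -/
theorem le_zero_of_smul_add_lapBar_mulVec_eq_zero (hsc : StronglyConnected A) {t : ℝ}
    (ht : 0 ≤ t) {i : Fin n} {y : Fin n → ℝ} (hyi : y i = 0)
    (hy : ∀ k ≠ i, t * y k + (lapBar A *ᵥ y) k = 0) (k : Fin n) : y k ≤ 0 := by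
  obtain ⟨k₀, -, hmax⟩ := Finset.exists_max_image Finset.univ y ⟨i, Finset.mem_univ i⟩
  by_contra! hk
  have hpos : 0 < y k₀ := hk.trans_le (hmax k (Finset.mem_univ k))
  have hclosed : ∀ u v, A v u ≠ 0 → y v = y k₀ → y u = y k₀ := by
    intro u v huv hv
    have hvi : v ≠ i := by rintro rfl; linarith
    have hterms : ∀ j ∈ Finset.univ, 0 ≤ |A v j| * (y v - y j) := fun j _ =>
      mul_nonneg (abs_nonneg _) (by linarith [hmax j (Finset.mem_univ j)])
    have hsum : ∑ j, |A v j| * (y v - y j) = 0 := by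
      have := hy v hvi
      rw [lapBar_mulVec_apply] at this
      linarith [Finset.sum_nonneg hterms, mul_nonneg ht (hv ▸ hpos.le)]
    have := (Finset.sum_eq_zero_iff_of_nonneg hterms).mp hsum u (Finset.mem_univ u)
    rcases mul_eq_zero.mp this with h | h
    · exact absurd (abs_eq_zero.mp h) huv
    · linarith
  have : y i = y k₀ := hsc.mem_of_pred_closed (S := {k | y k = y k₀}) hclosed rfl i
  linarith

theorem eq_zero_of_smul_add_lapBar_mulVec_eq_zero (hsc : StronglyConnected A) {t : ℝ}
    (ht : 0 ≤ t) {i : Fin n} {y : Fin n → ℝ} (hyi : y i = 0)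
    (hy : ∀ k ≠ i, t * y k + (lapBar A *ᵥ y) k = 0) : y = 0 := by
  have hneg : ∀ k ≠ i, t * (-y) k + (lapBar A *ᵥ -y) k = 0 := fun k hk => by
    simp only [Pi.neg_apply, mulVec_neg]
    linarith [hy k hk]
  ext k
  have h1 := hsc.le_zero_of_smul_add_lapBar_mulVec_eq_zero ht hyi hy k
  have h2 := hsc.le_zero_of_smul_add_lapBar_mulVec_eq_zero ht (by simp [hyi]) hneg k
  simp only [Pi.neg_apply, Pi.zero_apply] at h2 ⊢
  linarith

theorem det_smul_one_add_submatrix_lapBar_ne_zero (hsc : StronglyConnected A) (i : Fin n)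
    {t : ℝ} (ht : 0 ≤ t) :
    (t • 1 + (lapBar A).submatrix ((↑) : {l // l ≠ i} → Fin n) (↑)).det ≠ 0 := by
  intro hdet
  obtain ⟨v, hv, hker⟩ := exists_mulVec_eq_zero_iff.mpr hdet
  let y : Fin n → ℝ := fun k => if hk : k ≠ i then v ⟨k, hk⟩ else 0
  have hy : ∀ k ≠ i, t * y k + (lapBar A *ᵥ y) k = 0 := by
    intro k hk
    have hsub : (lapBar A *ᵥ y) k
        = ((lapBar A).submatrix ((↑) : {l // l ≠ i} → Fin n) (↑) *ᵥ v) ⟨k, hk⟩ := by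
      simp only [mulVec, dotProduct, submatrix_apply]
      rw [← Fintype.sum_subtype_add_sum_subtype (· ≠ i)]
      have hyv : ∀ a : {l // l ≠ i}, y a = v a := fun a => dif_pos a.2
      have hyi : ∀ a : {l // ¬l ≠ i}, y a = 0 := fun a => dif_neg a.2
      simp only [hyv, hyi, mul_zero, Finset.sum_const_zero, add_zero]
    rw [hsub, show y k = v ⟨k, hk⟩ from dif_pos hk]
    simpa [add_mulVec, smul_mulVec] using congr_fun hker ⟨k, hk⟩
  have hy0 := hsc.eq_zero_of_smul_add_lapBar_mulVec_eq_zero ht (by simp [y]) hy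
  exact hv (funext fun k => by simpa [y, k.2] using congr_fun hy0 k)

theorem minorDet_pos (hsc : StronglyConnected A) (i : Fin n) : 0 < minorDet A i :=
  det_pos_of_det_smul_one_add_ne_zero _ fun _ ht =>
    hsc.det_smul_one_add_submatrix_lapBar_ne_zero i ht

theorem dotProduct_Wmat_mul_lapBar_mulVec_pos (hsc : StronglyConnected A)
    {x : Fin n → ℝ} (hx1 : 1 ⬝ᵥ x = 0) (hx : x ≠ 0) : 0 < x ⬝ᵥ ((Wmat A * lapBar A) *ᵥ x) := by
  have hterm : ∀ i j, 0 ≤ minorDet A i * |A i j| * (x i - x j) ^ 2 := fun i j =>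
    mul_nonneg (mul_nonneg (hsc.minorDet_pos i).le (abs_nonneg _)) (sq_nonneg _)
  suffices 0 < ∑ i, ∑ j, minorDet A i * |A i j| * (x i - x j) ^ 2 by
    rw [← two_mul_dotProduct_Wmat_mul_lapBar_mulVec] at this
    linarith
  refine (Fintype.sum_nonneg fun i => Fintype.sum_nonneg (hterm i)).lt_of_ne' fun hzero => hx ?_
  have hadj : ∀ u v, A v u ≠ 0 → x v = x u := by
    intro u v huv
    have hrow := congr_fun ((Fintype.sum_eq_zero_iff_of_nonneg fun i =>
      Fintype.sum_nonneg (hterm i)).mp hzero) v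
    have := congr_fun ((Fintype.sum_eq_zero_iff_of_nonneg (hterm v)).mp hrow) u
    simp only [Pi.zero_apply, mul_eq_zero, (hsc.minorDet_pos v).ne', abs_eq_zero, huv,
      false_or, pow_eq_zero_iff two_ne_zero, sub_eq_zero] at this
    exact this
  ext k
  have hconst : 1 ⬝ᵥ x = n * x k := by
    simp [one_dotProduct, hsc.eq_of_forall_adj_eq hadj _ k]
  have : (n : ℝ) ≠ 0 := Nat.cast_ne_zero.mpr k.pos.ne'
  simpa [this] using hconst.symm.trans hx1

end StronglyConnected

namespace IsGauge

variable {σ : Fin n → ℝ}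

theorem mul_self (hσ : IsGauge σ) (i : Fin n) : σ i * σ i = 1 := by
  rcases hσ i with h | h <;> simp [h]

theorem diagonal_mul_self (hσ : IsGauge σ) : diagonal σ * diagonal σ = 1 := by
  rw [diagonal_mul_diagonal, ← diagonal_one]
  exact congrArg diagonal (funext hσ.mul_self)

theorem exp_neg_smul_conj (hσ : IsGauge σ) (N : Matrix (Fin n) (Fin n) ℝ) (t : ℝ) :
    NormedSpace.exp (-(t • (diagonal σ * N * diagonal σ)))
      = diagonal σ * NormedSpace.exp (-(t • N)) * diagonal σ := by
  have hinv : (diagonal σ)⁻¹ = diagonal σ := inv_eq_right_inv hσ.diagonal_mul_self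
  have hunit : IsUnit (diagonal σ) := ⟨⟨_, _, hσ.diagonal_mul_self, hσ.diagonal_mul_self⟩, rfl⟩
  rw [show -(t • (diagonal σ * N * diagonal σ)) = diagonal σ * -(t • N) * (diagonal σ)⁻¹ by
    rw [hinv, Matrix.mul_neg, Matrix.neg_mul, Matrix.mul_smul, Matrix.smul_mul],
    exp_conj _ _ hunit, hinv]

theorem mul_abs_mul_eq (hσ : IsGauge σ) (hbal : ∀ i j, 0 ≤ σ i * A i j * σ j) (i j : Fin n) :
    σ i * |A i j| * σ j = A i j := by
  have habs : |A i j| = σ i * A i j * σ j := by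
    rw [← abs_of_nonneg (hbal i j), abs_mul, abs_mul]
    rcases hσ i with h | h <;> rcases hσ j with h' | h' <;> simp [h, h']
  rw [habs]
  linear_combination (A i j) * (σ j * σ j * hσ.mul_self i + hσ.mul_self j)

theorem lapOf_eq_conj_lapBar (hσ : IsGauge σ) (hbal : ∀ i j, 0 ≤ σ i * A i j * σ j) :
    lapOf A = diagonal σ * lapBar A * diagonal σ := by
  ext i j
  have h := hσ.mul_abs_mul_eq hbal i j
  rw [mul_diagonal, diagonal_mul, lapOf, lapBar, Matrix.sub_apply, Matrix.sub_apply, of_apply]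
  rcases eq_or_ne i j with rfl | hij
  · rw [diagonal_apply_eq]
    linear_combination h - inDeg A i * hσ.mul_self i
  · rw [diagonal_apply_ne _ hij]
    linear_combination h

theorem Wmat_mul_lapOf_eq (hσ : IsGauge σ) (hbal : ∀ i j, 0 ≤ σ i * A i j * σ j) :
    Wmat A * lapOf A = diagonal σ * (Wmat A * lapBar A) * diagonal σ := by
  simp only [hσ.lapOf_eq_conj_lapBar hbal, Wmat, ← Matrix.mul_assoc, diagonal_mul_diagonal,
    mul_comm (minorDet A _) (σ _)]

end IsGauge

end Laplacian

theorem WL_signed_average_consensus_general (n : ℕ)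
    (A : Matrix (Fin n) (Fin n) ℝ)
    (hsc : StronglyConnected A) :
    StructBalanced A ↔
      ∃ σ : Fin n → ℝ, IsGauge σ ∧ (∀ i j, 0 ≤ σ i * A i j * σ j) ∧
        ∀ x₀ : Fin n → ℝ,
          Filter.Tendsto (fun t : ℝ => NormedSpace.exp (-(t • (Wmat A * lapOf A))) *ᵥ x₀)
            Filter.atTop (nhds (fun i => ((∑ j, σ j * x₀ j) / (n : ℝ)) * σ i)) := by
  refine ⟨fun ⟨σ, hσ, hbal⟩ => ⟨σ, hσ, hbal, fun x₀ => ?_⟩,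
    fun ⟨σ, hσ, hbal, _⟩ => ⟨σ, hσ, hbal⟩⟩
  have hconsensus := tendsto_exp_neg_smul_mulVec_average (Wmat_mul_lapBar_mulVec_one A)
    (one_vecMul_Wmat_mul_lapBar A) (fun _ => hsc.dotProduct_Wmat_mul_lapBar_mulVec_pos)
    (diagonal σ *ᵥ x₀)
  have hD : Continuous fun y : Fin n → ℝ => diagonal σ *ᵥ y :=
    continuous_const.matrix_mulVec continuous_id
  convert (hD.tendsto _).comp hconsensus using 2 with t
  · rw [hσ.Wmat_mul_lapOf_eq hbal, hσ.exp_neg_smul_conj, Function.comp_apply, mulVec_mulVec,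
      mulVec_mulVec, Matrix.mul_assoc]
  · ext i
    simp [mulVec_diagonal, mul_comm]

/-- `ẋ = −W·L·x` achieves signed-average consensus iff `G` is structurally
balanced. -/
theorem WL_signed_average_consensus (n : ℕ) (hn : 2 ≤ n)
    (A : Matrix (Fin n) (Fin n) ℝ)
    (hdiag : ∀ i, A i i = 0) (hdigon : ∀ i j, 0 ≤ A i j * A j i)
    (hsc : StronglyConnected A) :
    StructBalanced A ↔
      ∃ σ : Fin n → ℝ, IsGauge σ ∧ (∀ i j, 0 ≤ σ i * A i j * σ j) ∧
        ∀ x₀ : Fin n → ℝ,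
          Filter.Tendsto (fun t : ℝ => NormedSpace.exp (-(t • (Wmat A * lapOf A))) *ᵥ x₀)
            Filter.atTop (nhds (fun i => ((∑ j, σ j * x₀ j) / (n : ℝ)) * σ i)) :=
  WL_signed_average_consensus_general n A hsc
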